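/- arXiv:1401.1783 — 3 statements merged into one kernel-verified Lean document; each statement's English description precedes it below -/
import Mathlib

section
/- Let G = (V, E) be a directed graph with every vertex of in-degree at most 1, and let C_x denote the reachability set of x. For an integer K ≤ |V|, a set of K seed vertices whose reachability sets have the K largest cardinalities among the inclusion-maximal reachability sets maximizes, over all subsets S ⊆ V with |S| = K, the total number of vertices reachable from S (i.e., |⋃_{x ∈ S} C_x|). -/
private lemma chain_lem {V : Type*} (r : V → V → Prop)
    (hindeg : ∀ y x x', r x y → r x' y → x = x')
    {a b y : V} (h1 : Relation.ReflTransGen r a y) (h2 : Relation.ReflTransGen r b y) :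
    Relation.ReflTransGen r a b ∨ Relation.ReflTransGen r b a := by
  revert h2
  induction h1 with
  | refl => exact fun h2 => Or.inr h2
  | tail h1' step ih =>
      intro h2
      rcases h2.cases_tail with rfl | ⟨d, hbd, hdy⟩
      · exact Or.inl (h1'.tail step)
      · obtain rfl := hindeg _ _ _ hdy step
        exact ih hbd

/-- Case I optimality: in a digraph with in-degree at most 1, a set of K seeds whose
reachability sets are K distinct inclusion-maximal sets with the K largest cardinalities
among the inclusion-maximal reachability sets maximizes the number of vertices reachable
from the chosen set, over all K-element seed sets. -/
theorem stmt_1 {V : Type*} [Fintype V] [DecidableEq V] (r : V → V → Prop)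
    (hindeg : ∀ y x x', r x y → r x' y → x = x')
    (C : V → Set V) (hC : ∀ x, C x = {y | Relation.ReflTransGen r x y})
    (K : ℕ) (hK : K ≤ Fintype.card V)
    (S : Finset V) (hScard : S.card = K)
    (hmax : ∀ x ∈ S, ∀ z : V, ¬ C x ⊂ C z)
    (hdist : ∀ x ∈ S, ∀ x' ∈ S, x ≠ x' → C x ≠ C x')
    (hrank : ∀ x ∈ S, ∀ z : V, z ∉ S → (∀ w : V, ¬ C z ⊂ C w) →
      (C z).ncard ≤ (C x).ncard) :
    ∀ T : Finset V, T.card = K →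
      (⋃ x ∈ T, C x).ncard ≤ (⋃ x ∈ S, C x).ncard := by
  classical
  intro T hT
  set c : V → Finset V := fun x => (Set.toFinite (C x)).toFinset with hc
  have hmemc : ∀ x y, y ∈ c x ↔ y ∈ C x := fun x y => Set.Finite.mem_toFinset _
  have hcoec : ∀ x, ↑(c x) = C x := fun x => Set.Finite.coe_toFinset _
  have hcardc : ∀ x, (c x).card = (C x).ncard := by
    intro x
    rw [← Set.ncard_coe_finset, hcoec]
  have hreach : ∀ a b, Relation.ReflTransGen r a b → C b ⊆ C a := by
    intro a b hab y hy
    rw [hC] at hy ⊢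
    exact hab.trans hy
  have hdisj : ∀ a b, (∀ w, ¬ C a ⊂ C w) → (∀ w, ¬ C b ⊂ C w) → C a ≠ C b →
      Disjoint (C a) (C b) := by
    intro a b ha hb hne
    rw [Set.disjoint_left]
    intro y hya hyb
    have hya' : Relation.ReflTransGen r a y := by rwa [hC] at hya
    have hyb' : Relation.ReflTransGen r b y := by rwa [hC] at hyb
    rcases chain_lem r hindeg hya' hyb' with h | h
    · rcases (hreach a b h).ssubset_or_eq with hss | heq
      · exact hb a hss
      · exact hne heq.symm
    · rcases (hreach b a h).ssubset_or_eq with hss | heq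
      · exact ha b hss
      · exact hne heq
  have hexmax : ∀ z : V, ∃ m, C z ⊆ C m ∧ ∀ w, ¬ C m ⊂ C w := by
    intro z
    obtain ⟨m, hm, hmax'⟩ := Finset.exists_max_image
      (Finset.univ.filter fun w => C z ⊆ C w) (fun w => (C w).ncard)
      ⟨z, Finset.mem_filter.mpr ⟨Finset.mem_univ _, subset_rfl⟩⟩
    refine ⟨m, (Finset.mem_filter.mp hm).2, ?_⟩
    intro w hw
    have h1 : C z ⊆ C w := (Finset.mem_filter.mp hm).2.trans hw.subset
    have h2 := hmax' w (Finset.mem_filter.mpr ⟨Finset.mem_univ _, h1⟩)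
    have h3 := Set.ncard_lt_ncard hw (Set.toFinite _)
    omega
  choose mfun hmsub hmmax using hexmax
  set F : Finset (Finset V) := (T.image mfun).image c with hF
  set G : Finset (Finset V) := S.image c with hG
  have hcinj : Set.InjOn c S := by
    intro x hx x' hx' hcc
    by_contra hne
    exact hdist x hx x' hx' hne (by rw [← hcoec x, ← hcoec x', hcc])
  have hGcard : G.card = K := by
    rw [hG, Finset.card_image_of_injOn hcinj, hScard]
  have hFcard : F.card ≤ K :=
    calc F.card ≤ (T.image mfun).card := Finset.card_image_le
    _ ≤ T.card := Finset.card_image_le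
    _ = K := hT
  have hFwit : ∀ A ∈ F, ∃ w, A = c w ∧ ∀ u, ¬ C w ⊂ C u := by
    intro A hA
    obtain ⟨w, hw, rfl⟩ := Finset.mem_image.mp hA
    obtain ⟨t, ht, rfl⟩ := Finset.mem_image.mp hw
    exact ⟨mfun t, rfl, hmmax t⟩
  have hsetdisj : ∀ A ∈ F, ∀ B ∈ F, A ≠ B → Disjoint (id A) (id B) := by
    intro A hA B hB hne
    obtain ⟨w1, rfl, h1⟩ := hFwit A hA
    obtain ⟨w2, rfl, h2⟩ := hFwit B hB
    have hCne : C w1 ≠ C w2 := by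
      intro h
      exact hne (Finset.coe_injective (by rw [hcoec, hcoec, h]))
    simp only [id]
    rw [← Finset.disjoint_coe, hcoec, hcoec]
    exact hdisj w1 w2 h1 h2 hCne
  have hTsub : T.biUnion c ⊆ F.biUnion id := by
    intro y hy
    obtain ⟨t, ht, hyt⟩ := Finset.mem_biUnion.mp hy
    refine Finset.mem_biUnion.mpr ⟨c (mfun t), ?_, ?_⟩
    · exact Finset.mem_image.mpr ⟨mfun t, Finset.mem_image.mpr ⟨t, ht, rfl⟩, rfl⟩
    · show y ∈ c (mfun t)
      rw [hmemc] at hyt ⊢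
      exact hmsub t hyt
  have hT_eq : (⋃ x ∈ T, C x).ncard = (T.biUnion c).card := by
    rw [← Set.ncard_coe_finset]
    congr 1
    ext y
    simp [hmemc]
  have hS_eq : (⋃ x ∈ S, C x).ncard = (S.biUnion c).card := by
    rw [← Set.ncard_coe_finset]
    congr 1
    ext y
    simp [hmemc]
  have hFsum : (F.biUnion id).card = ∑ A ∈ F, A.card := by
    have := Finset.card_biUnion hsetdisj
    simpa using this
  have hSdisj : ∀ x ∈ S, ∀ x' ∈ S, x ≠ x' → Disjoint (c x) (c x') := by
    intro x hx x' hx' hne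
    rw [← Finset.disjoint_coe, hcoec, hcoec]
    exact hdisj x x' (hmax x hx) (hmax x' hx') (hdist x hx x' hx' hne)
  have hSsum : (S.biUnion c).card = ∑ x ∈ S, (c x).card := Finset.card_biUnion hSdisj
  have hGsum : ∑ A ∈ G, A.card = ∑ x ∈ S, (c x).card := by
    rw [hG]
    exact Finset.sum_image (fun x hx x' hx' h => hcinj hx hx' h)
  have hle : ∀ A ∈ F \ G, ∀ B ∈ G, A.card ≤ B.card := by
    intro A hA B hB
    obtain ⟨hAF, hAG⟩ := Finset.mem_sdiff.mp hA
    obtain ⟨w, rfl, hwmax⟩ := hFwit A hAF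
    obtain ⟨x, hx, rfl⟩ := Finset.mem_image.mp hB
    have hwS : w ∉ S := fun hw => hAG (Finset.mem_image.mpr ⟨w, hw, rfl⟩)
    rw [hcardc, hcardc]
    exact hrank x hx w hwS hwmax
  have hdiffcard : (F \ G).card ≤ (G \ F).card := by
    have h1 := Finset.card_inter_add_card_sdiff F G
    have h2 := Finset.card_inter_add_card_sdiff G F
    rw [Finset.inter_comm] at h2
    omega
  have hsumdiff : ∑ A ∈ F \ G, A.card ≤ ∑ B ∈ G \ F, B.card := by
    rcases (F \ G).eq_empty_or_nonempty with he | hne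
    · simp [he]
    · have hGFne : (G \ F).Nonempty :=
        Finset.card_pos.mp (lt_of_lt_of_le (Finset.card_pos.mpr hne) hdiffcard)
      set n := ((G \ F).image Finset.card).min' (hGFne.image _) with hn
      obtain ⟨B1, hB1, hB1n⟩ := Finset.mem_image.mp (Finset.min'_mem ((G \ F).image Finset.card) (hGFne.image _))
      have h1 : ∀ A ∈ F \ G, A.card ≤ n := by
        intro A hA
        rw [hn, ← hB1n]
        exact hle A hA B1 (Finset.mem_sdiff.mp hB1).1
      have h2 : ∀ B ∈ G \ F, n ≤ B.card := fun B hB =>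
        Finset.min'_le _ _ (Finset.mem_image_of_mem _ hB)
      calc ∑ A ∈ F \ G, A.card ≤ (F \ G).card * n := by
            simpa [smul_eq_mul] using Finset.sum_le_card_nsmul (F \ G) (fun A => A.card) n h1
        _ ≤ (G \ F).card * n := Nat.mul_le_mul_right n hdiffcard
        _ ≤ ∑ B ∈ G \ F, B.card := by
            simpa [smul_eq_mul] using Finset.card_nsmul_le_sum (G \ F) (fun A => A.card) n h2
  calc (⋃ x ∈ T, C x).ncard = (T.biUnion c).card := hT_eq
    _ ≤ (F.biUnion id).card := Finset.card_le_card hTsub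
    _ = ∑ A ∈ F, A.card := hFsum
    _ ≤ ∑ A ∈ G, A.card := by
        have e1 := Finset.sum_inter_add_sum_sdiff F G (fun A => A.card)
        have e2 := Finset.sum_inter_add_sum_sdiff G F (fun A => A.card)
        rw [Finset.inter_comm] at e2
        omega
    _ = ∑ x ∈ S, (c x).card := hGsum
    _ = (S.biUnion c).card := hSsum.symm
    _ = (⋃ x ∈ S, C x).ncard := hS_eq.symm
end

section
/- Let G = (V, E) be a graph with n vertices and m edges. Construct the Subset Cover instance where S = V and 𝒮 = { {u, v} : {u, v} ∈ E }. Then G has a clique of size K if and only if there exists a K-element subset S' ⊆ S that completely covers at least K(K−1)/2 elements of 𝒮 (where S' completely covers S_i when S_i ⊆ S'). -/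
open Finset

lemma card_sym2_not_diag {V : Type*} [DecidableEq V] (s : Finset V) :
    (s.sym2.filter (fun e => ¬ e.IsDiag)).card = s.card.choose 2 := by
  have h1 : s.sym2.filter (fun e => e.IsDiag) = s.image Sym2.diag := by
    ext e
    simp only [mem_filter, mem_image]
    constructor
    · rintro ⟨he, hd⟩
      induction e with
      | _ a b =>
        rw [Sym2.isDiag_iff_proj_eq] at hd
        obtain rfl := hd
        exact ⟨a, (Finset.mk_mem_sym2_iff.1 he).1, rfl⟩
    · rintro ⟨a, ha, rfl⟩
      exact ⟨Finset.diag_mem_sym2_iff.2 ha, Sym2.diag_isDiag a⟩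
  have h2 : (s.image Sym2.diag).card = s.card :=
    Finset.card_image_of_injective _ Sym2.diag_injective
  have h3 := Finset.card_filter_add_card_filter_not
    (s := s.sym2) (p := fun e => e.IsDiag)
  rw [h1, h2] at h3
  have h4 : s.sym2.card = (s.card + 1).choose 2 := Finset.card_sym2 s
  have : (s.card + 1).choose 2 = s.card.choose 2 + s.card := by
    rw [Nat.choose_succ_succ, Nat.choose_one_right, Nat.add_comm]
  omega

/-- Correctness of the Clique-to-Subset-Cover reduction: `G` has a clique of size `K`
iff some `K`-element vertex set completely covers at least `K(K-1)/2` edges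
(an edge is completely covered when both its endpoints are in the set). -/
theorem stmt_6 {V : Type*} [Fintype V] [DecidableEq V] (G : SimpleGraph V) (K : ℕ) :
    (∃ s : Finset V, s.card = K ∧ G.IsClique ↑s) ↔
    (∃ S' : Finset V, S'.card = K ∧
      K * (K - 1) / 2 ≤ {e ∈ G.edgeSet | ∀ v ∈ e, v ∈ S'}.ncard) := by
  classical
  constructor
  · rintro ⟨s, hcard, hclique⟩
    refine ⟨s, hcard, ?_⟩
    have hsub : (↑(s.sym2.filter (fun e => ¬ e.IsDiag)) : Set (Sym2 V)) ⊆
        {e ∈ G.edgeSet | ∀ v ∈ e, v ∈ s} := by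
      intro e he
      simp only [coe_filter, Set.mem_setOf_eq] at he
      obtain ⟨hes, hed⟩ := he
      induction e with
      | _ a b =>
        have ha := (Finset.mk_mem_sym2_iff.1 hes).1
        have hb := (Finset.mk_mem_sym2_iff.1 hes).2
        have hab : a ≠ b := fun h => hed (by simp [h])
        refine ⟨hclique ha hb hab, ?_⟩
        intro v hv
        rcases Sym2.mem_iff.1 hv with rfl | rfl <;> assumption
    calc K * (K - 1) / 2 = (s.sym2.filter (fun e => ¬ e.IsDiag)).card := by
          rw [card_sym2_not_diag, hcard, Nat.choose_two_right]
      _ = (↑(s.sym2.filter (fun e => ¬ e.IsDiag)) : Set (Sym2 V)).ncard := by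
          rw [Set.ncard_coe_finset]
      _ ≤ _ := Set.ncard_le_ncard hsub (Set.toFinite _)
  · rintro ⟨S', hcard, hle⟩
    refine ⟨S', hcard, ?_⟩
    set T : Set (Sym2 V) := {e ∈ G.edgeSet | ∀ v ∈ e, v ∈ S'} with hT
    have hsub : T ⊆ (↑(S'.sym2.filter (fun e => ¬ e.IsDiag)) : Set (Sym2 V)) := by
      intro e ⟨heE, hev⟩
      simp only [coe_filter, Set.mem_setOf_eq]
      exact ⟨Finset.mem_sym2_iff.2 hev, G.not_isDiag_of_mem_edgeSet heE⟩
    have hFc : (↑(S'.sym2.filter (fun e => ¬ e.IsDiag)) : Set (Sym2 V)).ncard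
        = K * (K - 1) / 2 := by
      rw [Set.ncard_coe_finset, card_sym2_not_diag, hcard, Nat.choose_two_right]
    have heq : T = (↑(S'.sym2.filter (fun e => ¬ e.IsDiag)) : Set (Sym2 V)) := by
      exact Set.eq_of_subset_of_ncard_le hsub (by rw [hFc]; exact hle) (Set.toFinite _)
    intro a ha b hb hab
    have : s(a, b) ∈ T := by
      rw [heq]
      simp only [coe_filter, Set.mem_setOf_eq]
      exact ⟨Finset.mk_mem_sym2_iff.2 ⟨ha, hb⟩, by simp [Sym2.isDiag_iff_proj_eq, hab]⟩
    exact this.1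
end

section
/- Let 𝒞 be a finite family of finite sets that is laminar (any two members are disjoint or one contains the other), and let K ≤ |𝒞|. Then a subfamily of K inclusion-maximal members of 𝒞 with the K largest cardinalities maximizes |⋃ of the chosen sets| over all K-element subfamilies of 𝒞. -/
/-!
Inclusion-maximal members of a laminar family are pairwise disjoint, so the union of any
subfamily of them has as cardinality the sum of their cardinalities. Replacing each member
of `T` by a maximal member above it can only enlarge the union, and leaves at most `K` sets.
Among at most `K` maximal members, the sum of cardinalities is then at most that of `Chosen`:
the sets outside `Chosen` are no larger than those inside it, and there are no more of them.
-/

open Finset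

namespace Finset

variable {ι κ M : Type*} [AddCommMonoid M] [LinearOrder M] [IsOrderedAddMonoid M]
  [CanonicallyOrderedAdd M]

theorem sum_le_sum_of_card_le_of_forall_le {s : Finset ι} {t : Finset κ} {f : ι → M} {g : κ → M}
    (hst : #s ≤ #t) (hfg : ∀ x ∈ s, ∀ y ∈ t, f x ≤ g y) :
    ∑ x ∈ s, f x ≤ ∑ y ∈ t, g y := by
  rcases s.eq_empty_or_nonempty with rfl | hs
  · simp
  calc ∑ x ∈ s, f x ≤ #s • s.sup' hs f := sum_le_card_nsmul _ _ _ fun x hx ↦ le_sup' f hx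
    _ ≤ #t • s.sup' hs f := nsmul_le_nsmul_left zero_le hst
    _ ≤ ∑ y ∈ t, g y := card_nsmul_le_sum _ _ _ fun y hy ↦ sup'_le hs f fun x hx ↦ hfg x hx y hy

theorem sum_le_sum_of_card_le_of_forall_sdiff_le [DecidableEq ι] {s t : Finset ι} {f : ι → M}
    (hst : #s ≤ #t) (hf : ∀ x ∈ s \ t, ∀ y ∈ t \ s, f x ≤ f y) :
    ∑ x ∈ s, f x ≤ ∑ y ∈ t, f y := by
  rw [← sum_inter_add_sum_sdiff s t, ← sum_inter_add_sum_sdiff t s, inter_comm]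
  exact add_le_add_right
    (sum_le_sum_of_card_le_of_forall_le (card_sdiff_le_card_sdiff_iff.2 hst) hf) _

end Finset

section Laminar

variable {α : Type*} [DecidableEq α] {𝒞 : Finset (Finset α)}

theorem disjoint_of_maximal_of_laminar
    (hlam : ∀ A ∈ 𝒞, ∀ B ∈ 𝒞, A ∩ B = ∅ ∨ A ⊆ B ∨ B ⊆ A) {A B : Finset α}
    (hA : Maximal (· ∈ 𝒞) A) (hB : Maximal (· ∈ 𝒞) B) (hAB : A ≠ B) : Disjoint A B := by
  rcases hlam A hA.prop B hB.prop with h | h | h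
  · exact disjoint_iff_inter_eq_empty.2 h
  · exact absurd (hA.eq_of_le hB.prop h) hAB
  · exact absurd (hB.eq_of_le hA.prop h).symm hAB

theorem card_biUnion_of_maximal_of_laminar
    (hlam : ∀ A ∈ 𝒞, ∀ B ∈ 𝒞, A ∩ B = ∅ ∨ A ⊆ B ∨ B ⊆ A) {M : Finset (Finset α)}
    (hM : ∀ A ∈ M, Maximal (· ∈ 𝒞) A) : #(M.biUnion id) = ∑ A ∈ M, #A :=
  card_biUnion fun A hA B hB hAB ↦ disjoint_of_maximal_of_laminar hlam (hM A hA) (hM B hB) hAB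

theorem exists_maximal_cover {T : Finset (Finset α)} (hT : T ⊆ 𝒞) :
    ∃ M : Finset (Finset α), #M ≤ #T ∧ (∀ A ∈ M, Maximal (· ∈ 𝒞) A) ∧
      T.biUnion id ⊆ M.biUnion id := by
  choose! up le_up maximal_up using fun B (hB : B ∈ T) ↦ 𝒞.exists_le_maximal (hT hB)
  refine ⟨T.image up, card_image_le, by simpa using maximal_up, ?_⟩
  intro x hx
  obtain ⟨B, hB, hxB⟩ := mem_biUnion.1 hx
  exact mem_biUnion.2 ⟨up B, mem_image_of_mem up hB, le_up B hB hxB⟩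

end Laminar

theorem stmt_13_general {α : Type*} [DecidableEq α] (𝒞 : Finset (Finset α))
    (hlam : ∀ A ∈ 𝒞, ∀ B ∈ 𝒞, A ∩ B = ∅ ∨ A ⊆ B ∨ B ⊆ A)
    (K : ℕ)
    (Chosen : Finset (Finset α)) (hsub : Chosen ⊆ 𝒞) (hcard : Chosen.card = K)
    (hmax : ∀ A ∈ Chosen, ∀ B ∈ 𝒞, ¬ A ⊂ B)
    (hrank : ∀ A ∈ Chosen, ∀ B ∈ 𝒞, B ∉ Chosen → (∀ B' ∈ 𝒞, ¬ B ⊂ B') →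
      B.card ≤ A.card) :
    ∀ T ⊆ 𝒞, T.card = K →
      (T.biUnion id).card ≤ (Chosen.biUnion id).card := by
  intro T hT hTK
  have hChosen : ∀ A ∈ Chosen, Maximal (· ∈ 𝒞) A := fun A hA ↦
    maximal_iff_forall_gt.2 ⟨hsub hA, fun B hAB hB ↦ hmax A hA B hB hAB⟩
  obtain ⟨M, hMT, hM, hcover⟩ := exists_maximal_cover hT
  calc #(T.biUnion id) ≤ #(M.biUnion id) := card_le_card hcover
    _ = ∑ A ∈ M, #A := card_biUnion_of_maximal_of_laminar hlam hM
    _ ≤ ∑ A ∈ Chosen, #A := by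
      refine sum_le_sum_of_card_le_of_forall_sdiff_le (by omega) fun B hB A hA ↦ ?_
      rw [mem_sdiff] at hA hB
      exact hrank A hA.1 B (hM B hB.1).prop hB.2 fun B' hB' ↦ (hM B hB.1).not_gt hB'
    _ = #(Chosen.biUnion id) := (card_biUnion_of_maximal_of_laminar hlam hChosen).symm

/-- In a finite laminar family, choosing `K` inclusion-maximal members with the `K`
largest cardinalities maximizes the cardinality of the union over all `K`-element
subfamilies. -/
theorem stmt_13 {α : Type*} [DecidableEq α] (𝒞 : Finset (Finset α))
    (hlam : ∀ A ∈ 𝒞, ∀ B ∈ 𝒞, A ∩ B = ∅ ∨ A ⊆ B ∨ B ⊆ A)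
    (K : ℕ) (hK : K ≤ 𝒞.card)
    (Chosen : Finset (Finset α)) (hsub : Chosen ⊆ 𝒞) (hcard : Chosen.card = K)
    (hmax : ∀ A ∈ Chosen, ∀ B ∈ 𝒞, ¬ A ⊂ B)
    (hrank : ∀ A ∈ Chosen, ∀ B ∈ 𝒞, B ∉ Chosen → (∀ B' ∈ 𝒞, ¬ B ⊂ B') →
      B.card ≤ A.card) :
    ∀ T ⊆ 𝒞, T.card = K →
      (T.biUnion id).card ≤ (Chosen.biUnion id).card :=
  stmt_13_general 𝒞 hlam K Chosen hsub hcard hmax hrank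
end
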